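/- Let P be a set of n points in ℝ^d, let f, g, h : P × ℝ^d → [0,∞), let z > 0, and let c₁, c₂ > 0 satisfy c₁(g(p,x)^z + h(p,x)^z) ≤ f(p,x) ≤ c₂(g(p,x)^z + h(p,x)^z) for every p ∈ P and x ∈ ℝ^d. Assume g(p, b·x) = b·g(p,x) for every p ∈ P, x ∈ ℝ^d and b > 0, and h(p,x)^z ≤ (2/n)·∑_{q∈P} h(q,x)^z for every p ∈ P and x ∈ ℝ^d. Let D be a d×d diagonal matrix with nonnegative entries and V a d×d orthogonal matrix such that DVᵀ is invertible and for every x ∈ ℝ^d, c₁(‖DVᵀx‖₂^z + ∑_{q∈P} h(q,x)^z) ≤ ∑_{q∈P} f(q,x). Let α > 0 be such that ∑_{q∈P} g(q,x)^{max{1,z}} ≤ (α·‖DVᵀx‖₂)^{max{1,z}} for every x ∈ ℝ^d. Suppose there exist d unit vectors v₁,…,v_d ∈ ℝ^d and c > 0 such that for every unit vector y ∈ ℝ^d and every p ∈ P, g(p,(DVᵀ)⁻¹y)^z ≤ c·∑_{j=1}^d g(p,(DVᵀ)⁻¹v_j)^z. Then the total sensitivity satisfies ∑_{p∈P} [2c₂/(c₁n)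 + (c·c₂/c₁)·∑_{j=1}^d g(p,(DVᵀ)⁻¹v_j)^z] ≤ 2c₂/c₁ + (c·c₂/c₁)·max{n^{1−z}, 1}·α^z·d; in particular the sum over p ∈ P of the sensitivities sup_{x : ∑_{q∈P} f(q,x) > 0} f(p,x)/∑_{q∈P} f(q,x) is at most 2c₂/c₁ + (c·c₂/c₁)·max{n^{1−z}, 1}·α^z·d. -/

import Mathlib

/-
Let `s = ‖DVᵀx‖₂` and `G p = ∑ⱼ g(p,(DVᵀ)⁻¹vⱼ)^z`. Homogeneity of `g` and the hypothesis at the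
unit vector `DVᵀx / s` give `g(p,x)^z ≤ s^z · c · G p`. Together with
`h(p,x)^z ≤ (2/n) ∑_q h(q,x)^z` and `c₁ (s^z + ∑_q h(q,x)^z) ≤ ∑_q f(q,x)`, this bounds the
sensitivity of `p` by `2c₂/(c₁n) + (cc₂/c₁) G p`. After exchanging sums, it remains to bound
`∑_p g(p,(DVᵀ)⁻¹vⱼ)^z` by `max(n^(1-z),1) α^z` for each `j`: for `z ≥ 1` this is the upper bound
at `(DVᵀ)⁻¹vⱼ`, and for `z ≤ 1` it follows from the power-mean inequality
`∑ aᵢ^z ≤ n^(1-z) (∑ aᵢ)^z`.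
-/

open Matrix

/-- The Euclidean (`ℓ₂`) norm of a vector in `ℝ^d`. -/
noncomputable def l2 {d : ℕ} (x : Fin d → ℝ) : ℝ := Real.sqrt (∑ i, x i ^ 2)

open Finset Real

lemma l2_eq_norm {d : ℕ} (x : Fin d → ℝ) :
    l2 x = ‖(WithLp.toLp 2 x : EuclideanSpace ℝ (Fin d))‖ := by
  simp [l2, EuclideanSpace.norm_eq]

lemma l2_nonneg {d : ℕ} (x : Fin d → ℝ) : 0 ≤ l2 x := Real.sqrt_nonneg _

lemma l2_smul {d : ℕ} {a : ℝ} (ha : 0 ≤ a) (x : Fin d → ℝ) : l2 (a • x) = a * l2 x := by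
  simp [l2_eq_norm, norm_smul, abs_of_nonneg ha]

lemma l2_eq_zero {d : ℕ} {x : Fin d → ℝ} : l2 x = 0 ↔ x = 0 := by
  simp [l2_eq_norm]

lemma sum_rpow_le_card_rpow_mul_rpow_sum {ι : Type*} {s : Finset ι} {a : ι → ℝ}
    (ha : ∀ i ∈ s, 0 ≤ a i) {z : ℝ} (hz : 0 < z) (hz1 : z ≤ 1) :
    ∑ i ∈ s, a i ^ z ≤ (#s : ℝ) ^ (1 - z) * (∑ i ∈ s, a i) ^ z := by
  have h := rpow_sum_le_const_mul_sum_rpow_of_nonneg s (f := fun i => a i ^ z)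
    ((one_le_inv₀ hz).2 hz1) (fun i hi => rpow_nonneg (ha i hi) z)
  rw [sum_congr rfl fun i hi => rpow_rpow_inv (ha i hi) hz.ne'] at h
  have hsum : 0 ≤ ∑ i ∈ s, a i ^ z := sum_nonneg fun i hi => rpow_nonneg (ha i hi) z
  calc ∑ i ∈ s, a i ^ z = ((∑ i ∈ s, a i ^ z) ^ z⁻¹) ^ z := (rpow_inv_rpow hsum hz.ne').symm
    _ ≤ ((#s : ℝ) ^ (z⁻¹ - 1) * ∑ i ∈ s, a i) ^ z := by gcongr
    _ = (#s : ℝ) ^ (1 - z) * (∑ i ∈ s, a i) ^ z := by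
        rw [mul_rpow (by positivity) (sum_nonneg ha), ← rpow_mul (Nat.cast_nonneg _)]
        congr 2
        field_simp

lemma sum_rpow_le_max_card_rpow_one_mul_rpow {ι : Type*} {s : Finset ι} {a : ι → ℝ}
    (ha : ∀ i ∈ s, 0 ≤ a i) {z B : ℝ} (hz : 0 < z) (hB : 0 ≤ B)
    (h : ∑ i ∈ s, a i ^ max 1 z ≤ B ^ max 1 z) :
    ∑ i ∈ s, a i ^ z ≤ max ((#s : ℝ) ^ (1 - z)) 1 * B ^ z := by
  rcases le_total 1 z with hz1 | hz1
  · rw [max_eq_right hz1] at h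
    exact h.trans (le_mul_of_one_le_left (by positivity) (le_max_right _ _))
  · simp only [max_eq_left hz1, rpow_one] at h
    calc ∑ i ∈ s, a i ^ z ≤ (#s : ℝ) ^ (1 - z) * (∑ i ∈ s, a i) ^ z :=
          sum_rpow_le_card_rpow_mul_rpow_sum ha hz hz1
      _ ≤ max ((#s : ℝ) ^ (1 - z)) 1 * B ^ z :=
          mul_le_mul (le_max_left _ _) (rpow_le_rpow (sum_nonneg ha) h hz.le)
            (rpow_nonneg (sum_nonneg ha) z) (by positivity)

lemma rpow_le_l2_mulVec_rpow_mul {d : ℕ} {M : Matrix (Fin d) (Fin d) ℝ} (hM : IsUnit M)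
    {φ : (Fin d → ℝ) → ℝ} (hφ0 : ∀ x, 0 ≤ φ x) (hφ : ∀ x, ∀ b : ℝ, 0 < b → φ (b • x) = b * φ x)
    {z K : ℝ} (hz : 0 < z) (hK : ∀ y, l2 y = 1 → φ (M⁻¹ *ᵥ y) ^ z ≤ K) (x : Fin d → ℝ) :
    φ x ^ z ≤ l2 (M *ᵥ x) ^ z * K := by
  have hMinv : M⁻¹ * M = 1 := nonsing_inv_mul M ((isUnit_iff_isUnit_det M).mp hM)
  rcases (l2_nonneg (M *ᵥ x)).eq_or_lt with hs | hs
  · have hx : x = 0 := (mulVec_injective_iff_isUnit.mpr hM) <| by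
      rw [mulVec_zero]; exact l2_eq_zero.mp hs.symm
    have hφ_zero : φ 0 = 0 := by
      have h2 := hφ 0 2 two_pos
      rw [smul_zero] at h2
      linarith
    rw [← hs, hx, hφ_zero, zero_rpow hz.ne', zero_mul]
  · set s := l2 (M *ᵥ x)
    have hy : l2 (s⁻¹ • M *ᵥ x) = 1 := by
      rw [l2_smul (inv_nonneg.mpr hs.le), inv_mul_cancel₀ hs.ne']
    have hMy : M⁻¹ *ᵥ (s⁻¹ • M *ᵥ x) = s⁻¹ • x := by
      rw [mulVec_smul, mulVec_mulVec, hMinv, one_mulVec]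
    have hφx : φ x = s * φ (s⁻¹ • x) := by
      rw [← hφ _ s hs, smul_smul, mul_inv_cancel₀ hs.ne', one_smul]
    calc φ x ^ z = s ^ z * φ (s⁻¹ • x) ^ z := by rw [hφx, mul_rpow hs.le (hφ0 _)]
      _ ≤ s ^ z * K := by gcongr; exact hMy ▸ hK _ hy

lemma div_le_of_sandwich {a b f F S H m K c₁ c₂ : ℝ} (hc₁ : 0 < c₁) (hc₂ : 0 ≤ c₂) (hF : 0 < F)
    (hS : 0 ≤ S) (hH : 0 ≤ H) (hm : 0 ≤ m) (hK : 0 ≤ K) (hf : f ≤ c₂ * (a + b))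
    (ha : a ≤ S * K) (hb : b ≤ m * H) (hlow : c₁ * (S + H) ≤ F) :
    f / F ≤ c₂ / c₁ * (m + K) := by
  rw [div_le_iff₀ hF, div_mul_eq_mul_div, div_mul_eq_mul_div, le_div_iff₀ hc₁]
  calc f * c₁ ≤ c₂ * (a + b) * c₁ := by gcongr
    _ ≤ c₂ * (S * K + m * H) * c₁ := by gcongr
    _ = c₂ * (K * (c₁ * S) + m * (c₁ * H)) := by ring
    _ ≤ c₂ * (m + K) * F := by
      rw [mul_assoc, add_mul, add_comm (m * F)]
      gcongr <;> nlinarith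

theorem total_sensitivity_bound_general {d n : ℕ} (P : Finset (Fin d → ℝ)) (hcard : P.card = n)
    (f g h : (Fin d → ℝ) → (Fin d → ℝ) → ℝ)
    (hg0 : ∀ p ∈ P, ∀ x, 0 ≤ g p x)
    (hh0 : ∀ p ∈ P, ∀ x, 0 ≤ h p x)
    (z c₁ c₂ : ℝ) (hz : 0 < z) (hc₁ : 0 < c₁) (hc₂ : 0 < c₂)
    (hsand : ∀ p ∈ P, ∀ x, c₁ * (g p x ^ z + h p x ^ z) ≤ f p x ∧
      f p x ≤ c₂ * (g p x ^ z + h p x ^ z))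
    (hghom : ∀ p ∈ P, ∀ x, ∀ b : ℝ, 0 < b → g p (b • x) = b * g p x)
    (hhsmall : ∀ p ∈ P, ∀ x, h p x ^ z ≤ (2 / (n : ℝ)) * ∑ q ∈ P, h q x ^ z)
    (D V : Matrix (Fin d) (Fin d) ℝ) (hinv : IsUnit (D * Vᵀ))
    (hlow : ∀ x, c₁ * (l2 ((D * Vᵀ).mulVec x) ^ z + ∑ q ∈ P, h q x ^ z) ≤ ∑ q ∈ P, f q x)
    (α : ℝ) (hα : 0 < α)
    (hup : ∀ x, ∑ q ∈ P, g q x ^ max 1 z ≤ (α * l2 ((D * Vᵀ).mulVec x)) ^ max 1 z)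
    (v : Fin d → Fin d → ℝ) (hv : ∀ j, l2 (v j) = 1) (c : ℝ) (hc : 0 < c)
    (hcv : ∀ y : Fin d → ℝ, l2 y = 1 → ∀ p ∈ P,
      g p ((D * Vᵀ)⁻¹.mulVec y) ^ z ≤ c * ∑ j, g p ((D * Vᵀ)⁻¹.mulVec (v j)) ^ z) :
    (∑ p ∈ P, (2 * c₂ / (c₁ * n) +
        (c * c₂ / c₁) * ∑ j, g p ((D * Vᵀ)⁻¹.mulVec (v j)) ^ z) ≤
      2 * c₂ / c₁ + (c * c₂ / c₁) * max ((n : ℝ) ^ (1 - z)) 1 * α ^ z * d) ∧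
    (∑ p ∈ P, (⨆ x : {x : Fin d → ℝ // 0 < ∑ q ∈ P, f q x},
        f p (x : Fin d → ℝ) / ∑ q ∈ P, f q (x : Fin d → ℝ)) ≤
      2 * c₂ / c₁ + (c * c₂ / c₁) * max ((n : ℝ) ^ (1 - z)) 1 * α ^ z * d) := by
  set G : (Fin d → ℝ) → ℝ := fun p => ∑ j, g p ((D * Vᵀ)⁻¹ *ᵥ v j) ^ z
  have hG0 : ∀ p ∈ P, 0 ≤ G p := fun p hp => sum_nonneg fun j _ => rpow_nonneg (hg0 p hp _) z
  have hcolumn (j : Fin d) :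
      ∑ p ∈ P, g p ((D * Vᵀ)⁻¹ *ᵥ v j) ^ z ≤ max ((n : ℝ) ^ (1 - z)) 1 * α ^ z := by
    have h := hup ((D * Vᵀ)⁻¹ *ᵥ v j)
    rw [mulVec_mulVec, mul_nonsing_inv _ ((isUnit_iff_isUnit_det _).mp hinv), one_mulVec, hv,
      mul_one] at h
    simpa only [hcard] using
      sum_rpow_le_max_card_rpow_one_mul_rpow (fun p hp => hg0 p hp _) hz hα.le h
  have hconst : (n : ℝ) * (2 * c₂ / (c₁ * n)) ≤ 2 * c₂ / c₁ := by
    rcases eq_or_ne (n : ℝ) 0 with hn | hn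
    · rw [hn, zero_mul]; positivity
    · field_simp; rfl
  have hbound : ∑ p ∈ P, (2 * c₂ / (c₁ * n) + (c * c₂ / c₁) * G p) ≤
      2 * c₂ / c₁ + (c * c₂ / c₁) * max ((n : ℝ) ^ (1 - z)) 1 * α ^ z * d := by
    rw [sum_add_distrib, sum_const, hcard, nsmul_eq_mul, ← mul_sum, sum_comm, mul_assoc,
      mul_assoc]
    gcongr
    calc ∑ j, ∑ p ∈ P, g p ((D * Vᵀ)⁻¹ *ᵥ v j) ^ z
        ≤ ∑ _j : Fin d, max ((n : ℝ) ^ (1 - z)) 1 * α ^ z := sum_le_sum fun j _ => hcolumn j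
      _ = max ((n : ℝ) ^ (1 - z)) 1 * (α ^ z * d) := by
        rw [sum_const, card_univ, Fintype.card_fin, nsmul_eq_mul]; ring
  have hsens : ∀ p ∈ P, ∀ x, 0 < ∑ q ∈ P, f q x →
      f p x / ∑ q ∈ P, f q x ≤ 2 * c₂ / (c₁ * n) + (c * c₂ / c₁) * G p := fun p hp x hF =>
    (div_le_of_sandwich hc₁ hc₂.le hF (rpow_nonneg (l2_nonneg _) z)
      (sum_nonneg fun q hq => rpow_nonneg (hh0 q hq x) z) (by positivity)
      (mul_nonneg hc.le (hG0 p hp)) (hsand p hp x).2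
      (rpow_le_l2_mulVec_rpow_mul hinv (hg0 p hp) (hghom p hp) hz (fun y hy => hcv y hy p hp) x)
      (hhsmall p hp x) (hlow x)).trans_eq (by ring)
  refine ⟨hbound, (sum_le_sum fun p hp => ?_).trans hbound⟩
  exact Real.iSup_le (fun x => hsens p hp x x.2) (by have := hG0 p hp; positivity)

/-- Total sensitivity bound for near-convex functions: under the `f`-SVD assumptions,
the sum over `p ∈ P` of the sensitivity upper bounds
`2c₂/(c₁ n) + (c c₂/c₁) ∑_j g(p, (DVᵀ)⁻¹ v_j)^z` is at most
`2c₂/c₁ + (c c₂/c₁)·max{n^(1−z),1}·α^z·d`; in particular the total sensitivity is at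
most this bound as well. -/
theorem total_sensitivity_bound {d n : ℕ} (P : Finset (Fin d → ℝ)) (hcard : P.card = n)
    (f g h : (Fin d → ℝ) → (Fin d → ℝ) → ℝ)
    (hf0 : ∀ p ∈ P, ∀ x, 0 ≤ f p x) (hg0 : ∀ p ∈ P, ∀ x, 0 ≤ g p x)
    (hh0 : ∀ p ∈ P, ∀ x, 0 ≤ h p x)
    (z c₁ c₂ : ℝ) (hz : 0 < z) (hc₁ : 0 < c₁) (hc₂ : 0 < c₂)
    (hsand : ∀ p ∈ P, ∀ x, c₁ * (g p x ^ z + h p x ^ z) ≤ f p x ∧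
      f p x ≤ c₂ * (g p x ^ z + h p x ^ z))
    (hghom : ∀ p ∈ P, ∀ x, ∀ b : ℝ, 0 < b → g p (b • x) = b * g p x)
    (hhsmall : ∀ p ∈ P, ∀ x, h p x ^ z ≤ (2 / (n : ℝ)) * ∑ q ∈ P, h q x ^ z)
    (D V : Matrix (Fin d) (Fin d) ℝ) (hD : D.IsDiag) (hDnn : ∀ i, 0 ≤ D i i)
    (hV : Vᵀ * V = 1 ∧ V * Vᵀ = 1) (hinv : IsUnit (D * Vᵀ))
    (hlow : ∀ x, c₁ * (l2 ((D * Vᵀ).mulVec x) ^ z + ∑ q ∈ P, h q x ^ z) ≤ ∑ q ∈ P, f q x)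
    (α : ℝ) (hα : 0 < α)
    (hup : ∀ x, ∑ q ∈ P, g q x ^ max 1 z ≤ (α * l2 ((D * Vᵀ).mulVec x)) ^ max 1 z)
    (v : Fin d → Fin d → ℝ) (hv : ∀ j, l2 (v j) = 1) (c : ℝ) (hc : 0 < c)
    (hcv : ∀ y : Fin d → ℝ, l2 y = 1 → ∀ p ∈ P,
      g p ((D * Vᵀ)⁻¹.mulVec y) ^ z ≤ c * ∑ j, g p ((D * Vᵀ)⁻¹.mulVec (v j)) ^ z) :
    (∑ p ∈ P, (2 * c₂ / (c₁ * n) +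
        (c * c₂ / c₁) * ∑ j, g p ((D * Vᵀ)⁻¹.mulVec (v j)) ^ z) ≤
      2 * c₂ / c₁ + (c * c₂ / c₁) * max ((n : ℝ) ^ (1 - z)) 1 * α ^ z * d) ∧
    (∑ p ∈ P, (⨆ x : {x : Fin d → ℝ // 0 < ∑ q ∈ P, f q x},
        f p (x : Fin d → ℝ) / ∑ q ∈ P, f q (x : Fin d → ℝ)) ≤
      2 * c₂ / c₁ + (c * c₂ / c₁) * max ((n : ℝ) ^ (1 - z)) 1 * α ^ z * d) :=
  total_sensitivity_bound_general P hcard f g h hg0 hh0 z c₁ c₂ hz hc₁ hc₂ hsand hghom hhsmall D V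
    hinv hlow α hα hup v hv c hc hcv
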